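/- arXiv:1804.07783 — 2 statements merged into one kernel-verified Lean document; each statement's English description precedes it below -/
import Mathlib

section
/- Let G be a locally compact abelian group with compact subgroup H of Haar measure 1, let a ∈ G, β ∈ Ĝ, and let f(x) = β(x)·𝟙_{a+H}(x). Then the Fourier transform of f is f̂(γ) = (β−γ)(a)·𝟙_{β+H^⊥}(γ), i.e., f̂(γ) = β(a)·γ(a)⁻¹ if γ ∈ β + H^⊥ and f̂(γ) = 0 otherwise. -/
open MeasureTheory Pointwise ComplexConjugate Classical

/-!
Dividing by `γ` turns the integrand into the indicator of `aH` times the single character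
`χ = β / γ`. Left translation by `a` shows `f̂(γ) = χ(a) ∫_H χ dμ`, and for `h ∈ H` translation
by `h` fixes `H`, so `∫_H χ dμ = χ(h) ∫_H χ dμ`: the integral vanishes unless `χ` is trivial
on `H`, in which case it is `μ(H) = 1`.
-/

section

variable {G : Type*} [Group G]

theorem Set.indicator_smul_set_mul_apply (φ : G →* ℂ) (s : Set G) (a x : G) :
    (a • s).indicator φ (a * x) = φ a * s.indicator φ x := by
  rw [← smul_eq_mul]
  by_cases hx : x ∈ s
  · rw [Set.indicator_of_mem (Set.smul_mem_smul_set hx), Set.indicator_of_mem hx, smul_eq_mul,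
      map_mul]
  · rw [Set.indicator_of_notMem (Set.smul_mem_smul_set_iff.not.mpr hx),
      Set.indicator_of_notMem hx, mul_zero]

variable [MeasurableSpace G] (μ : Measure G)

theorem integral_indicator_subgroup_of_eq_one (φ : G →* ℂ) {H : Subgroup G}
    (hHm : MeasurableSet (H : Set G)) (hφ : ∀ x ∈ H, φ x = 1) :
    ∫ x, (H : Set G).indicator φ x ∂μ = μ.real H := by
  rw [integral_indicator hHm, setIntegral_congr_fun hHm hφ, setIntegral_const, Complex.real_smul,
    mul_one]

variable [MeasurableMul G] [μ.IsMulLeftInvariant]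

theorem integral_indicator_smul_set (φ : G →* ℂ) (s : Set G) (a : G) :
    ∫ x, (a • s).indicator φ x ∂μ = φ a * ∫ x, s.indicator φ x ∂μ := by
  rw [← integral_mul_left_eq_self _ a, ← integral_const_mul]
  simp only [Set.indicator_smul_set_mul_apply]

theorem integral_indicator_subgroup_eq_zero (φ : G →* ℂ) {H : Subgroup G} {h : G}
    (hh : h ∈ H) (hφh : φ h ≠ 1) : ∫ x, (H : Set G).indicator φ x ∂μ = 0 := by
  have hfix := integral_indicator_smul_set μ φ H h
  rw [smul_coe_set hh] at hfix
  have hfactor : (φ h - 1) * ∫ x, (H : Set G).indicator φ x ∂μ = 0 := by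
    rw [sub_mul, one_mul, ← hfix, sub_self]
  exact (mul_eq_zero.mp hfactor).resolve_left (sub_ne_zero.mpr hφh)

end

theorem fourierTransform_character_indicator_coset_general
    {G : Type*} [CommGroup G] [TopologicalSpace G] [IsTopologicalGroup G]
    [T2Space G] [MeasurableSpace G] [BorelSpace G]
    (μ : Measure G) [μ.IsHaarMeasure]
    (H : Subgroup G) (hHc : IsCompact (H : Set G)) (hμH : μ (H : Set G) = 1)
    (a : G) (β : PontryaginDual G) (γ : PontryaginDual G) :
    (∫ x, (a • (H : Set G)).indicator (fun y => (β y : ℂ)) x * conj ((γ x : ℂ)) ∂μ)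
      = if ∀ x ∈ H, γ x = β x then (β a : ℂ) * conj ((γ a : ℂ)) else 0 := by
  set χ : G →* ℂ := Circle.coeHom.comp (β / γ).toMonoidHom
  have hχ (x : G) : χ x = β x * conj (γ x : ℂ) := by
    rw [← Circle.coe_inv_eq_conj, ← Circle.coe_mul, ← div_eq_mul_inv]; rfl
  have hχ_eq_one (x : G) : χ x = 1 ↔ γ x = β x := by
    change ((β x / γ x : Circle) : ℂ) = 1 ↔ _
    rw [Circle.coe_eq_one, div_eq_one, eq_comm]
  have hintegrand (x : G) : (a • (H : Set G)).indicator (fun y => (β y : ℂ)) x * conj (γ x : ℂ)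
      = (a • (H : Set G)).indicator χ x := by
    rw [funext hχ, Set.indicator_mul_left]
  simp only [hintegrand, integral_indicator_smul_set, ← hχ]
  split_ifs with hβγ
  · rw [integral_indicator_subgroup_of_eq_one μ χ hHc.isClosed.measurableSet
      (fun x hx => (hχ_eq_one x).mpr (hβγ x hx)), measureReal_def, hμH, ENNReal.toReal_one,
      Complex.ofReal_one, mul_one]
  · push Not at hβγ
    obtain ⟨h, hh, hne⟩ := hβγ
    rw [integral_indicator_subgroup_eq_zero μ χ hh ((hχ_eq_one h).not.mpr hne), mul_zero]

/-- Let `G` be a locally compact abelian (Hausdorff) group with a compact subgroup `H`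
whose Haar measure is `1`, let `a ∈ G`, `β ∈ Ĝ`, and let `f = β · 𝟙_{aH}` (written
multiplicatively; additively this is `f(x) = β(x)·𝟙_{a+H}(x)`). Then the Fourier
transform of `f` satisfies `f̂(γ) = β(a)·conj(γ(a))` when `γ` lies in the coset
`β·H^⊥` (equivalently, `γ` agrees with `β` on `H`) and `f̂(γ) = 0` otherwise. -/
theorem fourierTransform_character_indicator_coset
    {G : Type*} [CommGroup G] [TopologicalSpace G] [IsTopologicalGroup G]
    [LocallyCompactSpace G] [T2Space G] [MeasurableSpace G] [BorelSpace G]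
    (μ : Measure G) [μ.IsHaarMeasure]
    (H : Subgroup G) (hHc : IsCompact (H : Set G)) (hμH : μ (H : Set G) = 1)
    (a : G) (β : PontryaginDual G) (γ : PontryaginDual G) :
    (∫ x, (a • (H : Set G)).indicator (fun y => (β y : ℂ)) x * conj ((γ x : ℂ)) ∂μ)
      = if ∀ x ∈ H, γ x = β x then (β a : ℂ) * conj ((γ a : ℂ)) else 0 :=
  fourierTransform_character_indicator_coset_general μ H hHc hμH a β γ
end

section
/- Let G be a LCAG with compact subgroup H (Haar measure μ(H)=1), a ∈ G, β ∈ Ĝ, f(x) = β(x)𝟙_{a+H}(x), and let 𝒞 be a set of coset representatives of Ĝ/H^⊥ with σ_β ∈ 𝒞 the representative of the coset β + H^⊥. Then for any b ∈ G, τ_{[b],𝒞} f(x) = σ_β(b) · f(x − b), i.e., the generalized translation of f by [b] equals the ordinary translation of f by b multiplied by the unimodular constant σ_β(b). -/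
/-!
Right translation by `b` multiplies the Fourier transform at `γ` by `conj (γ b)`. If `γ` lies in the
coset `β H^⊥`, its representative is `σβ`, so `η γ = σβ⁻¹ γ` and the weight `conj (η γ b)` equals
`σβ b · conj (γ b)`. Otherwise some `h ∈ H` has `β h ≠ γ h`; the integrand of `f̂ γ` then picks up
the factor `β h · conj (γ h) ≠ 1` under `x ↦ x h`, so by right invariance `f̂ γ = 0` and both sides
vanish.
-/

open MeasureTheory Pointwise ComplexConjugate Classical
open scoped ENNReal

noncomputable section

/-- The generalized translation operator `τ_{[b],𝒞}` on the Fourier side: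
multiplication by the unimodular weight `w_{[b],𝒞}(γ) = conj(η_γ(b))`. -/
def tau {G : Type*} [CommGroup G] [TopologicalSpace G]
    (η : PontryaginDual G → PontryaginDual G) (b : G)
    (F : PontryaginDual G → ℂ) : PontryaginDual G → ℂ :=
  fun γ => F γ * conj ((η γ b : ℂ))

section RightInvariant

variable {G : Type*} [Group G]

theorem mul_mem_smul_subgroup_iff {H : Subgroup G} {h : G} (hh : h ∈ H) (a x : G) :
    x * h ∈ a • (H : Set G) ↔ x ∈ a • (H : Set G) := by
  rw [mem_leftCoset_iff, mem_leftCoset_iff, ← mul_assoc]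
  exact mul_mem_cancel_right hh

variable [MeasurableSpace G] [MeasurableMul G]
  (μ : Measure G) [μ.IsMulRightInvariant]

theorem integral_eq_zero_of_mul_right_eq_mul {g : G → ℂ} {h : G} {c : ℂ} (hc : c ≠ 1)
    (hg : ∀ x, g (x * h) = c * g x) : ∫ x, g x ∂μ = 0 := by
  have hfix : ∫ x, g x ∂μ = c * ∫ x, g x ∂μ := by
    rw [← integral_const_mul, ← integral_mul_right_eq_self g h]
    simp_rw [hg]
  have : (1 - c) * ∫ x, g x ∂μ = 0 := by linear_combination hfix
  exact (mul_eq_zero.mp this).resolve_left (sub_ne_zero.mpr hc.symm)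

variable [TopologicalSpace G]

theorem integral_mul_inv_mul_conj_character (f : G → ℂ) (γ : PontryaginDual G) (b : G) :
    ∫ x, f (x * b⁻¹) * conj (γ x : ℂ) ∂μ = conj (γ b : ℂ) * ∫ x, f x * conj (γ x : ℂ) ∂μ := by
  rw [← integral_mul_right_eq_self _ b, ← integral_const_mul]
  congr 1 with x
  rw [mul_inv_cancel_right, map_mul γ, Circle.coe_mul, map_mul]
  ring

theorem integral_indicator_coset_character_mul_conj_eq_zero (H : Subgroup G) (a : G)
    {β γ : PontryaginDual G} {h : G} (hh : h ∈ H) (hne : (β * γ⁻¹) h ≠ 1) :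
    ∫ x, (a • (H : Set G)).indicator (fun y => (β y : ℂ)) x * conj (γ x : ℂ) ∂μ = 0 := by
  refine integral_eq_zero_of_mul_right_eq_mul μ (h := h) (c := ((β * γ⁻¹) h : ℂ))
    (fun hc => hne (Circle.coe_eq_one.mp hc)) fun x => ?_
  have hc : (((β * γ⁻¹) h : Circle) : ℂ) = β h * conj (γ h : ℂ) := by
    rw [← Circle.coe_inv_eq_conj, ← Circle.coe_mul]
    rfl
  by_cases hx : x ∈ a • (H : Set G)
  · rw [Set.indicator_of_mem ((mul_mem_smul_subgroup_iff hh a x).mpr hx),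
      Set.indicator_of_mem hx, map_mul β, map_mul γ, Circle.coe_mul, Circle.coe_mul, map_mul, hc]
    ring
  · rw [Set.indicator_of_notMem (mt (mul_mem_smul_subgroup_iff hh a x).mp hx),
      Set.indicator_of_notMem hx]
    ring

end RightInvariant

theorem mul_inv_eq_of_coset_representative {G : Type*} [CommGroup G] [TopologicalSpace G]
    {H : Subgroup G} {𝒞 : Set (PontryaginDual G)} {η : PontryaginDual G → PontryaginDual G}
    (hη : ∀ γ, γ * (η γ)⁻¹ ∈ 𝒞 ∧ ∀ x ∈ H, η γ x = 1)
    (huniq : ∀ γ : PontryaginDual G,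
      ∃! s : PontryaginDual G, s ∈ 𝒞 ∧ ∀ x ∈ H, (γ * s⁻¹) x = 1)
    {β σβ γ : PontryaginDual G} (hσβ : σβ ∈ 𝒞 ∧ ∀ x ∈ H, (β * σβ⁻¹) x = 1)
    (hγ : ∀ x ∈ H, (β * γ⁻¹) x = 1) :
    γ * (η γ)⁻¹ = σβ := by
  obtain ⟨s, -, hs⟩ := huniq β
  refine (hs _ ⟨(hη γ).1, fun x hx => ?_⟩).trans (hs σβ hσβ).symm
  have hβγ : β x * (γ x)⁻¹ = 1 := hγ x hx
  change β x * (γ x * (η γ x)⁻¹)⁻¹ = 1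
  rw [(hη γ).2 x hx, inv_one, mul_one, hβγ]

theorem tau_of_character_indicator_general
    {G : Type*} [CommGroup G] [TopologicalSpace G] [IsTopologicalGroup G]
    [MeasurableSpace G] [BorelSpace G]
    (μ : Measure G) [μ.IsHaarMeasure]
    (H : Subgroup G)
    (𝒞 : Set (PontryaginDual G)) (η : PontryaginDual G → PontryaginDual G)
    (hη : ∀ γ, γ * (η γ)⁻¹ ∈ 𝒞 ∧ ∀ x ∈ H, η γ x = 1)
    (huniq : ∀ γ : PontryaginDual G,
      ∃! s : PontryaginDual G, s ∈ 𝒞 ∧ ∀ x ∈ H, (γ * s⁻¹) x = 1)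
    (a b : G) (β σβ : PontryaginDual G)
    (hσβ : σβ ∈ 𝒞 ∧ ∀ x ∈ H, (β * σβ⁻¹) x = 1) :
    (fun γ : PontryaginDual G =>
        ∫ x, ((σβ b : ℂ) *
            (a • (H : Set G)).indicator (fun y => (β y : ℂ)) (x * b⁻¹)) *
          conj ((γ x : ℂ)) ∂μ)
      = tau η b (fun γ : PontryaginDual G =>
          ∫ x, (a • (H : Set G)).indicator (fun y => (β y : ℂ)) x *
            conj ((γ x : ℂ)) ∂μ) := by
  funext γ
  simp_rw [tau, mul_assoc, integral_const_mul, integral_mul_inv_mul_conj_character μ]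
  by_cases hγ : ∀ x ∈ H, (β * γ⁻¹) x = 1
  · have hηγ : η γ = σβ⁻¹ * γ := by
      rw [← mul_inv_eq_of_coset_representative hη huniq hσβ hγ]
      group
    rw [hηγ]
    change _ = _ * conj (((σβ b)⁻¹ * γ b : Circle) : ℂ)
    rw [Circle.coe_mul, Circle.coe_inv_eq_conj, map_mul, Complex.conj_conj]
    ring
  · push Not at hγ
    obtain ⟨h, hh, hne⟩ := hγ
    rw [integral_indicator_coset_character_mul_conj_eq_zero μ H a hh hne]
    ring

/-- Let `G` be a LCA group with compact subgroup `H` of Haar measure `1`, `a ∈ G`,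
`β ∈ Ĝ`, and `f = β·𝟙_{aH}`. Let `𝒞` be a set of coset representatives of `Ĝ/H^⊥`,
with decomposition `γ = σ_γ · η_γ` (`σ_γ = γ (η γ)⁻¹ ∈ 𝒞`, `η γ ∈ H^⊥`), and let
`σβ ∈ 𝒞` be the representative of the coset `β·H^⊥`. Then for any `b ∈ G`, the
generalized translate `τ_{[b],𝒞} f` equals `σβ(b)` times the ordinary translate
of `f` by `b`: on the Fourier-transform side, the Fourier transform of
`x ↦ σβ(b)·f(x·b⁻¹)` equals `τ_{[b],𝒞}` applied to `f̂`. -/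
theorem tau_of_character_indicator
    {G : Type*} [CommGroup G] [TopologicalSpace G] [IsTopologicalGroup G]
    [LocallyCompactSpace G] [T2Space G] [MeasurableSpace G] [BorelSpace G]
    (μ : Measure G) [μ.IsHaarMeasure]
    (H : Subgroup G) (hHc : IsCompact (H : Set G)) (hμH : μ (H : Set G) = 1)
    (𝒞 : Set (PontryaginDual G)) (η : PontryaginDual G → PontryaginDual G)
    (hη : ∀ γ, γ * (η γ)⁻¹ ∈ 𝒞 ∧ ∀ x ∈ H, η γ x = 1)
    (huniq : ∀ γ : PontryaginDual G,
      ∃! s : PontryaginDual G, s ∈ 𝒞 ∧ ∀ x ∈ H, (γ * s⁻¹) x = 1)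
    (a b : G) (β σβ : PontryaginDual G)
    (hσβ : σβ ∈ 𝒞 ∧ ∀ x ∈ H, (β * σβ⁻¹) x = 1) :
    (fun γ : PontryaginDual G =>
        ∫ x, ((σβ b : ℂ) *
            (a • (H : Set G)).indicator (fun y => (β y : ℂ)) (x * b⁻¹)) *
          conj ((γ x : ℂ)) ∂μ)
      = tau η b (fun γ : PontryaginDual G =>
          ∫ x, (a • (H : Set G)).indicator (fun y => (β y : ℂ)) x *
            conj ((γ x : ℂ)) ∂μ) :=
  tau_of_character_indicator_general μ H 𝒞 η hη huniq a b β σβ hσβ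
end
end
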